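/- arXiv:hep-th/0403215 — 6 statements merged into one kernel-verified Lean document; each statement's English description precedes it below -/
import Mathlib

section
/- Let μ : ℂ → ℝ × ℂ, written μ(z) = (m(z), p(z)), be any map satisfying the E(2)-equivariance law: for all θ ∈ ℝ and all c, z ∈ ℂ, one has p(e^{iθ}z + c) = e^{iθ}p(z) and m(e^{iθ}z + c) = m(z) + Im( conj(c) · e^{iθ} p(z) ). Then p is identically zero and m is constant. (No continuity assumptions are needed.) -/
/-- Any map `μ = (m, p) : ℂ → ℝ × ℂ` satisfying the E(2)-equivariance law
(the coadjoint action of `E(2) = U(1) ⋉ ℂ` on `𝔢(2)* ≅ ℝ × ℂ`) has `p ≡ 0`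
and `m` constant. -/
theorem equivariant_map_to_e2_dual_is_constant
    (m : ℂ → ℝ) (p : ℂ → ℂ)
    (hp : ∀ (θ : ℝ) (c z : ℂ),
      p (Complex.exp (θ * Complex.I) * z + c) = Complex.exp (θ * Complex.I) * p z)
    (hm : ∀ (θ : ℝ) (c z : ℂ),
      m (Complex.exp (θ * Complex.I) * z + c)
        = m z + ((starRingEnd ℂ c) * Complex.exp (θ * Complex.I) * p z).im) :
    (∀ z : ℂ, p z = 0) ∧ (∀ z w : ℂ, m z = m w) := by
  have hconst : ∀ z : ℂ, p z = p 0 := by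
    intro z
    have h := hp 0 z 0
    simp at h; exact h
  have hp0 : p 0 = 0 := by
    have h := hp Real.pi 0 0
    have hπ : Complex.exp (Real.pi * Complex.I) = -1 := by
      exact_mod_cast Complex.exp_pi_mul_I
    rw [hπ] at h
    simp only [mul_zero, neg_mul, one_mul, zero_add] at h
    linear_combination h / 2
  have hpz : ∀ z : ℂ, p z = 0 := fun z => (hconst z).trans hp0
  refine ⟨hpz, fun z w => ?_⟩
  have h := hm 0 (w - z) z
  simp [hpz] at h
  rw [h]
end

section
/- Fix a real number κ ≠ 0. There do not exist functions P₀, P₁, P₂ : ℂ → ℝ such that: (i) the map z ↦ (P₀(z), P₁(z) + iP₂(z)) satisfies the E(2)-equivariance law, i.e. writing m = P₀ and p = P₁ + iP₂, for all θ ∈ ℝ and c, z ∈ ℂ one has p(e^{iθ}z + c) = e^{iθ}p(z) and m(e^{iθ}z + c) = m(z) + Im( conj(c) · e^{iθ} p(z) ); and (ii) P₁ is differentiable with (real Fréchet) derivative given by dP₁(z)[v] = −κ·Im(v) for all z, v ∈ ℂ. -/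
/-- For `κ ≠ 0` there is no triple `P₀, P₁, P₂ : ℂ → ℝ` such that
`z ↦ (P₀ z, P₁ z + i P₂ z)` is E(2)-equivariant (for the coadjoint action of
`E(2)` on `𝔢(2)* ≅ ℝ × ℂ`) and `P₁` is differentiable with derivative
`dP₁(z)[v] = −κ·Im v`: i.e. the symplectic `E(2)`-action admits no
equivariant moment map. -/
theorem no_equivariant_moment_map (κ : ℝ) (hκ : κ ≠ 0) :
    ¬ ∃ P₀ P₁ P₂ : ℂ → ℝ,
      (∀ (θ : ℝ) (c z : ℂ),
        ((P₁ (Complex.exp (θ * Complex.I) * z + c) : ℂ)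
            + (P₂ (Complex.exp (θ * Complex.I) * z + c) : ℂ) * Complex.I)
          = Complex.exp (θ * Complex.I) * ((P₁ z : ℂ) + (P₂ z : ℂ) * Complex.I)) ∧
      (∀ (θ : ℝ) (c z : ℂ),
        P₀ (Complex.exp (θ * Complex.I) * z + c)
          = P₀ z + ((starRingEnd ℂ c) * Complex.exp (θ * Complex.I)
              * ((P₁ z : ℂ) + (P₂ z : ℂ) * Complex.I)).im) ∧
      (∃ L : ℂ →L[ℝ] ℝ, (∀ v : ℂ, L v = -κ * v.im) ∧ ∀ z : ℂ, HasFDerivAt P₁ L z) := by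
  rintro ⟨P₀, P₁, P₂, h1, -, L, hLv, hD⟩
  -- θ = 0 : P₁ is translation invariant, hence constant
  have hconst : ∀ w : ℂ, P₁ w = P₁ 0 := by
    intro w
    have := h1 0 w 0
    simp only [Complex.ofReal_zero, zero_mul, Complex.exp_zero, one_mul, mul_zero,
      zero_add, mul_comm] at this
    have := congrArg Complex.re this
    simpa using this
  have hfun : P₁ = fun _ => P₁ 0 := funext hconst
  have h0 : HasFDerivAt (fun _ : ℂ => P₁ 0) L 0 := hfun ▸ hD 0
  have hL0 : L = 0 := by
    have := (hasFDerivAt_const (P₁ 0) (0 : ℂ)).unique h0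
    exact this.symm
  have : (-κ : ℝ) = 0 := by
    have := hLv Complex.I
    rw [hL0] at this
    simpa using this.symm
  exact hκ (by linarith)
end

section
/- Fix N ≥ 2 and a function F : (0,∞) → ℝ. Let z : ℝ → ℂ^N be a differentiable curve whose components z_1(t),…,z_N(t) are pairwise distinct for every t and which solves the asymptotic vortex equations. Then t ↦ Σ_{r=1}^N |z_r(t)|² is constant in t. -/
/-!
Each term of `ż_r` is `i` times a real multiple of `z_r - z_s`, so `d/dt |z_r|² = 2⟪z_r, ż_r⟫`
splits into contributions `F(|z_r - z_s|) ⟪z_r, i (z_r - z_s)⟫ = F(|z_r - z_s|) Im(z̄_r z_s)`.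
The weight is symmetric and `Im(z̄_r z_s)` antisymmetric in `(r, s)`, so the double sum vanishes.
-/

open Finset

theorem Finset.sum_sum_eq_zero_of_antisymm {ι G : Type*} [AddCommGroup G] [IsAddTorsionFree G]
    (s : Finset ι) {f : ι → ι → G} (hf : ∀ i j, f i j = -f j i) :
    ∑ i ∈ s, ∑ j ∈ s, f i j = 0 := by
  refine self_eq_neg.mp ?_
  calc ∑ i ∈ s, ∑ j ∈ s, f i j = ∑ j ∈ s, ∑ i ∈ s, f i j := Finset.sum_comm
    _ = ∑ j ∈ s, ∑ i ∈ s, -f j i := sum_congr rfl fun j _ => sum_congr rfl fun i _ => hf i j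
    _ = -∑ i ∈ s, ∑ j ∈ s, f i j := by simp only [sum_neg_distrib]

theorem Complex.inner_I_mul_sub_eq_neg (x y : ℂ) :
    inner ℝ x (I * (x - y)) = -inner ℝ y (I * (y - x)) := by
  simp only [Complex.inner, mul_re, mul_im, sub_re, sub_im, I_re, I_im, conj_re, conj_im]
  ring

noncomputable def vortexVelocity {ι : Type*} [Fintype ι] [DecidableEq ι] (F : ℝ → ℝ)
    (a : ι → ℂ) (r : ι) : ℂ :=
  Complex.I * ∑ s ∈ univ.erase r, (F ‖a r - a s‖ : ℂ) * (a r - a s)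

theorem sum_inner_vortexVelocity_eq_zero {ι : Type*} [Fintype ι] [DecidableEq ι] (F : ℝ → ℝ)
    (a : ι → ℂ) : ∑ r, inner ℝ (a r) (vortexVelocity F a r) = 0 := by
  have hterm : ∀ r, inner ℝ (a r) (vortexVelocity F a r)
      = ∑ s, F ‖a r - a s‖ * inner ℝ (a r) (Complex.I * (a r - a s)) := by
    intro r
    rw [vortexVelocity, mul_sum, inner_sum, sum_erase _ (by simp)]
    refine sum_congr rfl fun s _ => ?_
    rw [mul_left_comm, ← Complex.real_smul, real_inner_smul_right]
  simp only [hterm]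
  refine sum_sum_eq_zero_of_antisymm _ fun r s => ?_
  rw [Complex.inner_I_mul_sub_eq_neg, norm_sub_rev, mul_neg]

theorem sum_sq_moduli_conserved_general (N : ℕ) (F : ℝ → ℝ)
    (z : ℝ → Fin N → ℂ)
    (heq : ∀ (t : ℝ) (r : Fin N),
      HasDerivAt (fun τ => z τ r)
        (Complex.I * ∑ s ∈ univ.erase r,
          (F ‖z t r - z t s‖ : ℂ) * (z t r - z t s)) t) :
    ∀ t t' : ℝ,
      ∑ r, ‖z t r‖ ^ 2 = ∑ r, ‖z t' r‖ ^ 2 := by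
  have hvel : ∀ t r, HasDerivAt (fun τ => z τ r) (vortexVelocity F (z t) r) t := heq
  have hderiv : ∀ t, HasDerivAt (fun τ => ∑ r, ‖z τ r‖ ^ 2) 0 t := by
    intro t
    have h := HasDerivAt.fun_sum fun r (_ : r ∈ univ) => (hvel t r).norm_sq
    rwa [← mul_sum, sum_inner_vortexVelocity_eq_zero, mul_zero] at h
  exact is_const_of_deriv_eq_zero (fun t => (hderiv t).differentiableAt) fun t => (hderiv t).deriv

/-- For `N` vortices with pairwise distinct positions solving the asymptotic
vortex equations `ż_r = i·Σ_{s≠r} F(|z_r − z_s|)·(z_r − z_s)`, the quantity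
`Σ_r |z_r|²` (the leading-order angular momentum `P₀`) is conserved. -/
theorem sum_sq_moduli_conserved (N : ℕ) (hN : 2 ≤ N) (F : ℝ → ℝ)
    (z : ℝ → Fin N → ℂ)
    (hdist : ∀ (t : ℝ) (r s : Fin N), r ≠ s → z t r ≠ z t s)
    (heq : ∀ (t : ℝ) (r : Fin N),
      HasDerivAt (fun τ => z τ r)
        (Complex.I * ∑ s ∈ univ.erase r,
          (F ‖z t r - z t s‖ : ℂ) * (z t r - z t s)) t) :
    ∀ t t' : ℝ,
      ∑ r, ‖z t r‖ ^ 2 = ∑ r, ‖z t' r‖ ^ 2 :=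
  sum_sq_moduli_conserved_general N F z heq
end

section
/- Fix N ≥ 2, a function F : (0,∞) → ℝ and σ > 0. Let λ := e^{2πi/N} and define Ω := Σ_{j=1}^{N−1} F(σ·|1 − λ^j|)·(1 − cos(2πj/N)), a real number. Then the curves z_r(t) := σ·λ^r·e^{iΩt}, r = 1, …, N, solve the asymptotic vortex equations: ż_r(t) = i·Σ_{s≠r} F(|z_r(t) − z_s(t)|)·(z_r(t) − z_s(t)) for all t and r. In other words, N vortices placed at the vertices of a regular N-gon of circumradius σ rotate rigidly about their centroid with constant angular frequency Ω. -/
/-!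
Writing `z_s = z_r λ^(s-r)`, the right-hand side of the vortex equation for `z_r` becomes
`z_r · Σ_{j=1}^{N-1} F(σ|1-λ^j|)(1-λ^j)`. The substitution `j ↦ -j (mod N)` conjugates each term
of this sum, so it is real and equals its real part `Ω`. The velocity is therefore `iΩ z_r`, which
is the derivative of `z_r(t) = z_r(0) e^{iΩt}`.
-/

open Finset ComplexConjugate Complex
open scoped Real

lemma pow_val_add_of_pow_eq_one {M : Type*} [Monoid M] {N : ℕ} {ω : M} (hω : ω ^ N = 1)
    (a b : Fin N) : ω ^ ((a + b : Fin N) : ℕ) = ω ^ (a : ℕ) * ω ^ (b : ℕ) := by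
  rw [Fin.val_add, ← pow_eq_pow_mod _ hω, pow_add]

lemma conj_pow_val_of_pow_eq_one {N : ℕ} [NeZero N] {ω : ℂ} (hω : ω ^ N = 1) (j : Fin N) :
    conj (ω ^ (j : ℕ)) = ω ^ ((-j : Fin N) : ℕ) := by
  have hnorm : ‖ω ^ (j : ℕ)‖ = 1 := by
    rw [norm_pow, norm_eq_one_of_pow_eq_one hω (NeZero.ne N), one_pow]
  rw [← inv_eq_conj hnorm, inv_eq_of_mul_eq_one_left]
  rw [← pow_val_add_of_pow_eq_one hω, neg_add_cancel, Fin.val_zero, pow_zero]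

lemma ofReal_re_sum_pow_val {N : ℕ} [NeZero N] {ω : ℂ} (hω : ω ^ N = 1) {f : ℂ → ℂ}
    (hf : ∀ x, f (conj x) = conj (f x)) :
    ((∑ j : Fin N, f (ω ^ (j : ℕ))).re : ℂ) = ∑ j : Fin N, f (ω ^ (j : ℕ)) := by
  rw [← conj_eq_iff_re, map_sum]
  simp_rw [← hf, conj_pow_val_of_pow_eq_one hω]
  exact Equiv.sum_comp (Equiv.neg (Fin N)) fun j => f (ω ^ (j : ℕ))

lemma sum_erase_sub_eq_sum {G M : Type*} [AddGroup G] [Fintype G] [DecidableEq G]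
    [AddCommMonoid M] {φ : G → M} (hφ : φ 0 = 0) (r : G) :
    ∑ s ∈ univ.erase r, φ (s - r) = ∑ j, φ j := by
  rw [sum_erase _ (by rwa [sub_self])]
  exact (Equiv.subRight r).sum_comp φ

lemma sum_fin_eq_sum_Ico_one {M : Type*} [AddCommMonoid M] {f : ℕ → M} (hf : f 0 = 0) (N : ℕ) :
    ∑ j : Fin N, f j = ∑ j ∈ Ico 1 N, f j := by
  rw [Fin.sum_univ_eq_sum_range, range_eq_Ico]
  refine (sum_subset (Ico_subset_Ico_left zero_le_one) fun j hj hj1 => ?_).symm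
  obtain rfl : j = 0 := by simp_all
  exact hf

lemma re_exp_two_pi_I_div_pow (N j : ℕ) :
    (exp (2 * π * I / N) ^ j).re = Real.cos (2 * π * j / N) := by
  rw [← Complex.exp_nat_mul, ← exp_ofReal_mul_I_re]
  push_cast
  ring_nf

lemma sum_pow_val_exp_two_pi_I_div (N : ℕ) [NeZero N] (G : ℝ → ℝ) :
    ∑ j : Fin N, (G ‖1 - exp (2 * π * I / N) ^ (j : ℕ)‖ : ℂ) * (1 - exp (2 * π * I / N) ^ (j : ℕ))
      = ↑(∑ j ∈ Ico 1 N, G ‖1 - exp (2 * π * I / N) ^ j‖ * (1 - Real.cos (2 * π * j / N))) := by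
  have hω := (isPrimitiveRoot_exp N (NeZero.ne N)).pow_eq_one
  rw [← ofReal_re_sum_pow_val hω (f := fun x => G ‖1 - x‖ * (1 - x)) fun x => by
    rw [map_mul, conj_ofReal, ← norm_conj (1 - x), map_sub, map_one]]
  rw [re_sum, ← sum_fin_eq_sum_Ico_one (by simp)]
  simp only [re_ofReal_mul, sub_re, one_re, re_exp_two_pi_I_div_pow]

lemma hasDerivAt_mul_cexp_mul_ofReal (c a : ℂ) (t : ℝ) :
    HasDerivAt (fun t : ℝ => c * exp (a * t)) (a * (c * exp (a * t))) t := by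
  have h := (((hasDerivAt_id t).ofReal_comp.const_mul a).cexp).const_mul c
  simp only [id, ofReal_one, mul_one] at h
  exact h.congr_deriv (by ring)

lemma norm_exp_I_mul_ofReal_mul (Ω t : ℝ) : ‖exp (I * Ω * t)‖ = 1 := by
  rw [show I * Ω * t = ((Ω * t : ℝ) : ℂ) * I by push_cast; ring, norm_exp_ofReal_mul_I]

theorem rotating_polygon_solves_general (N : ℕ) (F : ℝ → ℝ)
    (σ : ℝ) (hσ : 0 < σ)
    (lam : ℂ) (hlam : lam = Complex.exp (2 * Real.pi * Complex.I / N))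
    (Ω : ℝ)
    (hΩ : Ω = ∑ j ∈ Finset.Ico 1 N,
      F (σ * ‖1 - lam ^ j‖) * (1 - Real.cos (2 * Real.pi * j / N)))
    (z : Fin N → ℝ → ℂ)
    (hz : ∀ (r : Fin N) (t : ℝ),
      z r t = σ * lam ^ ((r : ℕ) + 1) * Complex.exp (Complex.I * Ω * t)) :
    ∀ (t : ℝ) (r : Fin N),
      HasDerivAt (z r)
        (Complex.I * ∑ s ∈ univ.erase r,
          (F (‖z r t - z s t‖) : ℂ) * (z r t - z s t)) t := by
  intro t r
  have : NeZero N := ⟨r.pos.ne'⟩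
  have hlamN : lam ^ N = 1 := hlam ▸ (isPrimitiveRoot_exp N (NeZero.ne N)).pow_eq_one
  have hrot (s : Fin N) : z s t = z r t * lam ^ ((s - r : Fin N) : ℕ) := by
    have hs := pow_val_add_of_pow_eq_one hlamN r (s - r)
    rw [add_sub_cancel] at hs
    rw [hz, hz, pow_succ, pow_succ, hs]
    ring
  have hnorm : ‖z r t‖ = σ := by
    rw [hz, norm_mul, norm_mul, norm_pow, norm_eq_one_of_pow_eq_one hlamN (NeZero.ne N),
      norm_exp_I_mul_ofReal_mul, norm_real, Real.norm_of_nonneg hσ.le, one_pow, mul_one, mul_one]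
  have hsum : ∑ s ∈ univ.erase r, (F ‖z r t - z s t‖ : ℂ) * (z r t - z s t) = Ω * z r t := by
    calc _ = ∑ s ∈ univ.erase r, z r t * ((F (σ * ‖1 - lam ^ ((s - r : Fin N) : ℕ)‖) : ℂ)
              * (1 - lam ^ ((s - r : Fin N) : ℕ))) := by
          refine sum_congr rfl fun s _ => ?_
          rw [hrot s, ← mul_one_sub, norm_mul, hnorm]
          ring
      _ = z r t * ∑ j : Fin N, (F (σ * ‖1 - lam ^ (j : ℕ)‖) : ℂ) * (1 - lam ^ (j : ℕ)) := by
          rw [← mul_sum, sum_erase_sub_eq_sum (φ := fun j : Fin N =>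
            (F (σ * ‖1 - lam ^ (j : ℕ)‖) : ℂ) * (1 - lam ^ (j : ℕ))) (by simp)]
      _ = Ω * z r t := by
          subst hlam
          rw [sum_pow_val_exp_two_pi_I_div N fun x => F (σ * x), hΩ, mul_comm]
  rw [hsum, funext (hz r)]
  exact (hasDerivAt_mul_cexp_mul_ofReal _ _ t).congr_deriv (by beta_reduce; ring)

/-- `N` vortices placed at the vertices of a regular `N`-gon of circumradius
`σ`, i.e. `z_r(t) = σ·λ^r·e^{iΩt}` with `λ = e^{2πi/N}` and
`Ω = Σ_{j=1}^{N−1} F(σ|1−λ^j|)(1 − cos(2πj/N))`, solve the asymptotic vortex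
equations: they rotate rigidly about their centroid with frequency `Ω`. -/
theorem rotating_polygon_solves (N : ℕ) (hN : 2 ≤ N) (F : ℝ → ℝ)
    (σ : ℝ) (hσ : 0 < σ)
    (lam : ℂ) (hlam : lam = Complex.exp (2 * Real.pi * Complex.I / N))
    (Ω : ℝ)
    (hΩ : Ω = ∑ j ∈ Finset.Ico 1 N,
      F (σ * ‖1 - lam ^ j‖) * (1 - Real.cos (2 * Real.pi * j / N)))
    (z : Fin N → ℝ → ℂ)
    (hz : ∀ (r : Fin N) (t : ℝ),
      z r t = σ * lam ^ ((r : ℕ) + 1) * Complex.exp (Complex.I * Ω * t)) :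
    ∀ (t : ℝ) (r : Fin N),
      HasDerivAt (z r)
        (Complex.I * ∑ s ∈ univ.erase r,
          (F (‖z r t - z s t‖) : ℂ) * (z r t - z s t)) t :=
  rotating_polygon_solves_general N F σ hσ lam hlam Ω hΩ z hz
end

section
/- Fix N ≥ 1, let ζ := e^{2πi/N}, and let a, b, c : ℤ/Nℤ → ℂ. Let A, B, C be the N × N circulant matrices with entries A_{rs} = a(s−r), B_{rs} = b(s−r), C_{rs} = c(s−r) (indices in ℤ/Nℤ), and for each m ∈ ℤ/Nℤ set α_m := Σ_k a(k)ζ^{mk}, β_m := Σ_k b(k)ζ^{mk}, γ_m := Σ_k c(k)ζ^{mk}. Then the characteristic polynomial of the 2N × 2N block matrix M = [[A, B], [C, A]] factorizes as char(M)(X) = Π_{m ∈ ℤ/Nℤ} ( (X − α_m)² − β_m·γ_m ). In particular the eigenvalues of M, with multiplicity, are α_m ± √(β_m γ_m) for m ∈ ℤ/Nℤ. -/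
/-!
The additive character `ψ k = ζ ^ k.val` of `ℤ/Nℤ` is primitive, so the Fourier matrix
`F r m = ψ (r * m)` is invertible, and each column `r ↦ ψ (r * m)` is an eigenvector of every
circulant `a (s - r)`, with eigenvalue `Σ_k a k ψ (m * k)`. Conjugating `[[A, B], [C, A]]` by
`[[F, 0], [0, F]]` therefore gives `[[diag α, diag β], [diag γ, diag α]]`, which after reordering
the basis is block diagonal with `2 × 2` blocks `[[α_m, β_m], [γ_m, α_m]]`.
-/

open Finset Polynomial

namespace Matrix

variable {ι R : Type*} [Fintype ι] [DecidableEq ι] [CommRing R]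

theorem charpoly_eq_of_mul_eq_mul {M M' G : Matrix ι ι R} (hG : IsUnit G)
    (h : M * G = G * M') : M.charpoly = M'.charpoly := by
  obtain ⟨G, rfl⟩ := hG
  have hM' : M' = G⁻¹.val * (M * G.val) := by rw [h, ← mul_assoc, G.inv_mul, one_mul]
  rw [hM', charpoly_mul_comm, mul_assoc, G.mul_inv, mul_one]

theorem det_fromBlocks_diagonal (a b c d : ι → R) :
    (fromBlocks (diagonal a) (diagonal b) (diagonal c) (diagonal d)).det
      = ∏ i, (a i * d i - b i * c i) := by
  let e : ι ⊕ ι ≃ Fin 2 × ι :=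
    (Equiv.boolProdEquivSum ι).symm.trans (Equiv.prodCongrLeft fun _ => finTwoEquiv.symm)
  have hblock : fromBlocks (diagonal a) (diagonal b) (diagonal c) (diagonal d)
      = (blockDiagonal fun i => !![a i, b i; c i, d i]).submatrix e e := by
    ext (i | i) (j | j) <;> by_cases h : i = j <;> simp [e, h, blockDiagonal_apply, finTwoEquiv]
  simp [hblock, det_submatrix_equiv_self, det_blockDiagonal, det_fin_two_of]

theorem charpoly_fromBlocks_diagonal (a b c d : ι → R) :
    (fromBlocks (diagonal a) (diagonal b) (diagonal c) (diagonal d)).charpoly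
      = ∏ i, ((X - C (a i)) * (X - C (d i)) - C (b i * c i)) := by
  simp only [charpoly, charmatrix_fromBlocks, charmatrix_diagonal, diagonal_map (map_zero C),
    diagonal_neg, det_fromBlocks_diagonal, neg_mul_neg, map_mul]

end Matrix

section FourierMatrix

variable {S R : Type*} [CommRing S] [Fintype S] [DecidableEq S] [CommRing R]

def fourierMatrix (ψ : AddChar S R) : Matrix S S R := Matrix.of fun r m => ψ (r * m)

def circulantEigenvalue (ψ : AddChar S R) (a : S → R) (m : S) : R := ∑ k, a k * ψ (m * k)

theorem circulant_mul_fourierMatrix (ψ : AddChar S R) {a : S → R} {A : Matrix S S R}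
    (hA : ∀ r s, A r s = a (s - r)) :
    A * fourierMatrix ψ = fourierMatrix ψ * Matrix.diagonal (circulantEigenvalue ψ a) := by
  ext r m
  rw [Matrix.mul_diagonal]
  simp only [Matrix.mul_apply, fourierMatrix, circulantEigenvalue, Matrix.of_apply, hA, mul_sum]
  refine Fintype.sum_equiv (Equiv.subRight r) _ _ fun k => ?_
  rw [Equiv.subRight_apply, show k * m = r * m + m * (k - r) by ring, ψ.map_add_eq_mul]
  ring

theorem fourierMatrix_mul_fourierMatrix_inv [IsDomain R] {ψ : AddChar S R}
    (hψ : ψ.IsPrimitive) :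
    fourierMatrix ψ * fourierMatrix ψ⁻¹ = (Fintype.card S : R) • 1 := by
  ext r s
  have hterm : ∀ m, ψ (r * m) * ψ⁻¹ (m * s) = ψ (m * (r - s)) := fun m => by
    rw [AddChar.inv_apply, ← ψ.map_add_eq_mul]
    ring_nf
  simp only [Matrix.mul_apply, fourierMatrix, Matrix.of_apply, hterm, AddChar.sum_mulShift _ hψ,
    sub_eq_zero, Matrix.smul_apply, Matrix.one_apply, smul_eq_mul, mul_ite, mul_one, mul_zero,
    Nat.cast_ite, Nat.cast_zero]

theorem isUnit_fourierMatrix [IsDomain R] {ψ : AddChar S R}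
    (hψ : ψ.IsPrimitive) (hS : IsUnit (Fintype.card S : R)) : IsUnit (fourierMatrix ψ) := by
  have hdet := congrArg Matrix.det (fourierMatrix_mul_fourierMatrix_inv hψ)
  rw [Matrix.det_mul, Matrix.det_smul, Matrix.det_one, mul_one] at hdet
  exact (Matrix.isUnit_iff_isUnit_det _).2 (isUnit_of_mul_isUnit_left (hdet ▸ hS.pow _))

end FourierMatrix

open Matrix in
/-- The characteristic polynomial of the block matrix `[[A, B], [C, A]]`
built from circulant matrices `A, B, C` over `ℤ/Nℤ` with generating vectors
`a, b, c` factorizes as `Π_m ((X − α_m)² − β_m·γ_m)`, where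
`α_m, β_m, γ_m` are the discrete Fourier transforms of `a, b, c` at `m`. -/
theorem charpoly_block_circulant (N : ℕ) [NeZero N] (a b c : ZMod N → ℂ)
    (ζ : ℂ) (hζ : ζ = Complex.exp (2 * Real.pi * Complex.I / N))
    (A B C : Matrix (ZMod N) (ZMod N) ℂ)
    (hA : ∀ r s : ZMod N, A r s = a (s - r))
    (hB : ∀ r s : ZMod N, B r s = b (s - r))
    (hC : ∀ r s : ZMod N, C r s = c (s - r)) :
    (Matrix.fromBlocks A B C A).charpoly
      = ∏ m : ZMod N,
          ((X - Polynomial.C (∑ k : ZMod N, a k * ζ ^ (m * k).val)) ^ 2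
            - Polynomial.C ((∑ k : ZMod N, b k * ζ ^ (m * k).val)
                * (∑ k : ZMod N, c k * ζ ^ (m * k).val))) := by
  have hprim : IsPrimitiveRoot ζ N := hζ ▸ Complex.isPrimitiveRoot_exp N (NeZero.ne N)
  set ψ := AddChar.zmodChar N hprim.pow_eq_one
  have hdetF : IsUnit (fourierMatrix ψ).det := (isUnit_iff_isUnit_det _).1 <|
    isUnit_fourierMatrix (AddChar.zmodChar_primitive_of_primitive_root N hprim) (by simp [NeZero.ne N])
  have hG : IsUnit (fromBlocks (fourierMatrix ψ) 0 0 (fourierMatrix ψ)) := by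
    rw [isUnit_iff_isUnit_det, det_fromBlocks_zero₂₁]
    exact hdetF.mul hdetF
  have hsim : fromBlocks A B C A * fromBlocks (fourierMatrix ψ) 0 0 (fourierMatrix ψ)
      = fromBlocks (fourierMatrix ψ) 0 0 (fourierMatrix ψ) *
        fromBlocks (diagonal (circulantEigenvalue ψ a)) (diagonal (circulantEigenvalue ψ b))
          (diagonal (circulantEigenvalue ψ c)) (diagonal (circulantEigenvalue ψ a)) := by
    simp [fromBlocks_multiply, circulant_mul_fourierMatrix ψ hA, circulant_mul_fourierMatrix ψ hB,
      circulant_mul_fourierMatrix ψ hC]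
  rw [charpoly_eq_of_mul_eq_mul hG hsim, charpoly_fromBlocks_diagonal]
  exact prod_congr rfl fun m _ => by rw [sq]; rfl
end

section
/- Let U ⊆ ℂ^N be open and let b_1, …, b_N : U → ℂ be twice continuously differentiable (as functions of the underlying real variables). For a real-differentiable function f : U → ℂ define the Wirtinger derivatives ∂f/∂z_r := (1/2)(D_{e_r}f − i·D_{i·e_r}f) and ∂f/∂z̄_r := (1/2)(D_{e_r}f + i·D_{i·e_r}f), where D_v denotes the real directional derivative along v and e_r is the r-th standard basis vector of ℂ^N. Suppose the hermiticity condition ∂b_s/∂z_r = conj( ∂b_r/∂z_s ) holds on U for all r, s. Then for all r, s, t, the function c_{rs} := ∂b_r/∂z̄_s − ∂b_s/∂z̄_r satisfies ∂c_{rs}/∂z_t = 0 on U; that is, each c_{rs} is antiholomorphic on U. -/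
/-- The Wirtinger derivative `∂f/∂z_r` of `f : ℂ^N → ℂ` at `z`, defined via
real directional derivatives: `(1/2)(D_{e_r}f − i·D_{i e_r}f)`. -/
noncomputable def wirtingerD {N : ℕ} (r : Fin N) (f : (Fin N → ℂ) → ℂ)
    (z : Fin N → ℂ) : ℂ :=
  (1 / 2 : ℂ) * (fderiv ℝ f z (Pi.single r 1)
    - Complex.I * fderiv ℝ f z (Pi.single r Complex.I))

/-- The conjugate Wirtinger derivative `∂f/∂z̄_r` of `f : ℂ^N → ℂ` at `z`:
`(1/2)(D_{e_r}f + i·D_{i e_r}f)`. -/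
noncomputable def wirtingerDBar {N : ℕ} (r : Fin N) (f : (Fin N → ℂ) → ℂ)
    (z : Fin N → ℂ) : ℂ :=
  (1 / 2 : ℂ) * (fderiv ℝ f z (Pi.single r 1)
    + Complex.I * fderiv ℝ f z (Pi.single r Complex.I))


/-!
The Wirtinger operators are constant-coefficient combinations of real directional
derivatives, so on `C²` functions they commute with each other (symmetry of the second
derivative), and `∂/∂z̄` of a conjugate is the conjugate of `∂/∂z`. Hence
`∂_t ∂̄_s b_r = ∂̄_s ∂_t b_r = ∂̄_s conj(∂_r b_t) = conj(∂_s ∂_r b_t)`, which is symmetric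
in `r, s`, so `∂_t (∂̄_s b_r − ∂̄_r b_s) = 0`.
-/

open Complex ComplexConjugate Filter Topology

noncomputable section

section SecondDerivative

variable {E F G : Type*} [NormedAddCommGroup E] [NormedSpace ℝ E]
  [NormedAddCommGroup F] [NormedSpace ℝ F] [NormedAddCommGroup G] [NormedSpace ℝ G]

theorem ContDiffAt.hasFDerivAt_clm_comp_fderiv {f : E → F} {z : E}
    (hf : ContDiffAt ℝ 2 f z) (ℓ : (E →L[ℝ] F) →L[ℝ] G) :
    HasFDerivAt (fun w => ℓ (fderiv ℝ f w)) (ℓ.comp (fderiv ℝ (fderiv ℝ f) z)) z :=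
  have hf' : DifferentiableAt ℝ (fderiv ℝ f) z :=
    (hf.fderiv_right (m := 1) (by norm_num)).differentiableAt one_ne_zero
  ℓ.hasFDerivAt.comp z hf'.hasFDerivAt

end SecondDerivative

variable {N : ℕ}

/-- `L ↦ (1/2)(L e_r + σ L (i e_r))`: `wirtingerD r f z` is its value at `fderiv ℝ f z`
for `σ = -i`, and `wirtingerDBar r f z` for `σ = i`. -/
def wirtingerFunctional (σ : ℂ) (r : Fin N) : ((Fin N → ℂ) →L[ℝ] ℂ) →L[ℝ] ℂ :=
  (1 / 2 : ℂ) • (ContinuousLinearMap.apply ℝ ℂ (Pi.single r 1)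
    + σ • ContinuousLinearMap.apply ℝ ℂ (Pi.single r I))

theorem wirtingerFunctional_apply (σ : ℂ) (r : Fin N) (L : (Fin N → ℂ) →L[ℝ] ℂ) :
    wirtingerFunctional σ r L = (1 / 2 : ℂ) * (L (Pi.single r 1) + σ * L (Pi.single r I)) :=
  rfl

theorem wirtingerD_eq (r : Fin N) (f : (Fin N → ℂ) → ℂ) :
    wirtingerD r f = fun z => wirtingerFunctional (-I) r (fderiv ℝ f z) := by
  ext z
  rw [wirtingerD, wirtingerFunctional_apply, neg_mul, sub_eq_add_neg]

theorem wirtingerDBar_eq (r : Fin N) (f : (Fin N → ℂ) → ℂ) :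
    wirtingerDBar r f = fun z => wirtingerFunctional I r (fderiv ℝ f z) :=
  rfl

theorem wirtingerFunctional_comp_comm {B : (Fin N → ℂ) →L[ℝ] (Fin N → ℂ) →L[ℝ] ℂ}
    (hB : ∀ u v, B u v = B v u) (σ τ : ℂ) (r s : Fin N) :
    wirtingerFunctional σ r (wirtingerFunctional τ s ∘L B)
      = wirtingerFunctional τ s (wirtingerFunctional σ r ∘L B) := by
  simp only [wirtingerFunctional_apply, ContinuousLinearMap.comp_apply]
  rw [hB (Pi.single r 1) (Pi.single s 1), hB (Pi.single r 1) (Pi.single s I),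
    hB (Pi.single r I) (Pi.single s 1), hB (Pi.single r I) (Pi.single s I)]
  ring

theorem ContDiffAt.wirtingerFunctional_fderiv_comm {f : (Fin N → ℂ) → ℂ} {z : Fin N → ℂ}
    (hf : ContDiffAt ℝ 2 f z) (σ τ : ℂ) (r s : Fin N) :
    wirtingerFunctional σ r (fderiv ℝ (fun w => wirtingerFunctional τ s (fderiv ℝ f w)) z)
      = wirtingerFunctional τ s
          (fderiv ℝ (fun w => wirtingerFunctional σ r (fderiv ℝ f w)) z) := by
  rw [(hf.hasFDerivAt_clm_comp_fderiv _).fderiv, (hf.hasFDerivAt_clm_comp_fderiv _).fderiv]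
  exact wirtingerFunctional_comp_comm (fun u v => hf.isSymmSndFDerivAt (by simp) u v) _ _ _ _

section Wirtinger

variable {f g : (Fin N → ℂ) → ℂ} {z : Fin N → ℂ}

theorem ContDiffAt.differentiableAt_wirtingerD (hf : ContDiffAt ℝ 2 f z) (r : Fin N) :
    DifferentiableAt ℝ (wirtingerD r f) z := by
  rw [wirtingerD_eq]
  exact (hf.hasFDerivAt_clm_comp_fderiv _).differentiableAt

theorem ContDiffAt.differentiableAt_wirtingerDBar (hf : ContDiffAt ℝ 2 f z) (r : Fin N) :
    DifferentiableAt ℝ (wirtingerDBar r f) z := by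
  rw [wirtingerDBar_eq]
  exact (hf.hasFDerivAt_clm_comp_fderiv _).differentiableAt

theorem ContDiffAt.wirtingerD_wirtingerDBar_comm (hf : ContDiffAt ℝ 2 f z) (r s : Fin N) :
    wirtingerD r (wirtingerDBar s f) z = wirtingerDBar s (wirtingerD r f) z := by
  simp only [wirtingerD_eq, wirtingerDBar_eq]
  exact hf.wirtingerFunctional_fderiv_comm _ _ _ _

theorem ContDiffAt.wirtingerD_comm (hf : ContDiffAt ℝ 2 f z) (r s : Fin N) :
    wirtingerD r (wirtingerD s f) z = wirtingerD s (wirtingerD r f) z := by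
  simp only [wirtingerD_eq]
  exact hf.wirtingerFunctional_fderiv_comm _ _ _ _

theorem wirtingerD_sub (hf : DifferentiableAt ℝ f z) (hg : DifferentiableAt ℝ g z)
    (r : Fin N) :
    wirtingerD r (fun w => f w - g w) z = wirtingerD r f z - wirtingerD r g z := by
  simp only [wirtingerD, fderiv_fun_sub hf hg, sub_apply]
  ring

theorem wirtingerDBar_conj (hg : DifferentiableAt ℝ g z) (r : Fin N) :
    wirtingerDBar r (fun w => conj (g w)) z = conj (wirtingerD r g z) := by
  have hconj : fderiv ℝ (fun w => conj (g w)) z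
      = conjCLE.toContinuousLinearMap ∘L fderiv ℝ g z :=
    (conjCLE.hasFDerivAt.comp z hg.hasFDerivAt).fderiv
  simp only [wirtingerDBar, wirtingerD, hconj, ContinuousLinearMap.comp_apply,
    ContinuousLinearEquiv.coe_coe, conjCLE_apply, map_mul, map_sub, map_div₀, map_one,
    map_ofNat, conj_I]
  ring

theorem Filter.EventuallyEq.wirtingerDBar_eq (h : f =ᶠ[𝓝 z] g) (r : Fin N) :
    wirtingerDBar r f z = wirtingerDBar r g z := by
  rw [wirtingerDBar, wirtingerDBar, h.fderiv_eq]

end Wirtinger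

end

/-- If `b_1, …, b_N : U → ℂ` are `C²` on an open set `U ⊆ ℂ^N` and satisfy
the hermiticity condition `∂b_s/∂z_r = conj(∂b_r/∂z_s)` on `U`, then each
function `c_{rs} = ∂b_r/∂z̄_s − ∂b_s/∂z̄_r` is antiholomorphic on `U`:
all its Wirtinger derivatives `∂c_{rs}/∂z_t` vanish. -/
theorem samols_coefficients_antiholomorphic {N : ℕ}
    (U : Set (Fin N → ℂ)) (hU : IsOpen U)
    (b : Fin N → (Fin N → ℂ) → ℂ)
    (hb : ∀ r : Fin N, ContDiffOn ℝ 2 (b r) U)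
    (hHerm : ∀ z ∈ U, ∀ r s : Fin N,
      wirtingerD r (b s) z = (starRingEnd ℂ) (wirtingerD s (b r) z)) :
    ∀ r s t : Fin N, ∀ z ∈ U,
      wirtingerD t
        (fun w => wirtingerDBar s (b r) w - wirtingerDBar r (b s) w) z = 0 := by
  intro r s t z hz
  have hU_nhds : U ∈ 𝓝 z := hU.mem_nhds hz
  have hc (p : Fin N) : ContDiffAt ℝ 2 (b p) z := (hb p).contDiffAt hU_nhds
  have hHerm_nhds (p q : Fin N) :
      wirtingerD p (b q) =ᶠ[𝓝 z] fun w => conj (wirtingerD q (b p) w) := by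
    filter_upwards [hU_nhds] with w hw
    exact hHerm w hw p q
  calc wirtingerD t (fun w => wirtingerDBar s (b r) w - wirtingerDBar r (b s) w) z
      = wirtingerDBar s (wirtingerD t (b r)) z - wirtingerDBar r (wirtingerD t (b s)) z := by
        rw [wirtingerD_sub ((hc r).differentiableAt_wirtingerDBar s)
            ((hc s).differentiableAt_wirtingerDBar r),
          (hc r).wirtingerD_wirtingerDBar_comm, (hc s).wirtingerD_wirtingerDBar_comm]
    _ = conj (wirtingerD s (wirtingerD r (b t)) z)
          - conj (wirtingerD r (wirtingerD s (b t)) z) := by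
        rw [(hHerm_nhds t r).wirtingerDBar_eq, (hHerm_nhds t s).wirtingerDBar_eq,
          wirtingerDBar_conj ((hc t).differentiableAt_wirtingerD r),
          wirtingerDBar_conj ((hc t).differentiableAt_wirtingerD s)]
    _ = 0 := by rw [(hc t).wirtingerD_comm, sub_self]
end
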